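/- arXiv:cs/0605097 — 5 statements merged into one kernel-verified Lean document; each statement's English description precedes it below -/
import Mathlib

section
/- (Single Source Lemma) If fixed sets F_p for p ∈ P satisfy the single-source axiom, then for all p, p_a ∈ P, v ∈ V, and n ∈ ℕ: if v ∈ F_p and (p_a, v) ∈ f_R^n(k_0), then p = p_a and (p_a, v) ∈ k_0. That is, no principal other than the unique source of v ever learns v. -/
variable {P V : Type*}

def fR (R : Set (P × V × P × Set (P × V))) (k : Set (P × V)) : Set (P × V) :=
  k ∪ {pv | ∃ pb ka, (pb, pv.2) ∈ k ∧ ka ⊆ k ∧ (pb, pv.2, pv.1, ka) ∈ R}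

/-- `Fp` is a fixed set for `p`: every rule of `p` producing a value in `Fp` requires
the receiver to already know some value of `Fp`. -/
def isFixedSet (R : Set (P × V × P × Set (P × V))) (p : P) (Fp : Set V) : Prop :=
  ∀ v pa ka, (p, v, pa, ka) ∈ R → v ∈ Fp → ∃ x ∈ Fp, (pa, x) ∈ ka

def KnownOnlyAtSource (F : P → Set V) (k0 k : Set (P × V)) : Prop :=
  ∀ p pa v, v ∈ F p → (pa, v) ∈ k → p = pa ∧ (pa, v) ∈ k0

/-- A rule teaching `pa` a value of `F p` must be fired by `p` and, the set being fixed, requires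
`pa` to already know some value of `F p`; so `pa = p`, which is a forbidden self-rule. -/
theorem knownOnlyAtSource_fR {R : Set (P × V × P × Set (P × V))} {F : P → Set V}
    {k0 k : Set (P × V)}
    (hNoSelf : ∀ (p : P) (v : V) (ka : Set (P × V)), (p, v, p, ka) ∉ R)
    (hFixed : ∀ p, isFixedSet R p (F p)) (hk : KnownOnlyAtSource F k0 k) :
    KnownOnlyAtSource F k0 (fR R k) := by
  rintro p pa v hv (hknown | ⟨pb, ka, hpb, hka, hrule⟩)
  · exact hk p pa v hv hknown
  · obtain ⟨rfl, -⟩ := hk p pb v hv hpb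
    obtain ⟨x, hx, hxa⟩ := hFixed p v pa ka hrule hv
    obtain ⟨rfl, -⟩ := hk p pa x hx (hka hxa)
    exact absurd hrule (hNoSelf p v ka)

theorem single_source_lemma
    (R : Set (P × V × P × Set (P × V))) (k0 : Set (P × V)) (F : P → Set V)
    (hNoSelf : ∀ (p : P) (v : V) (ka : Set (P × V)), (p, v, p, ka) ∉ R)
    (hFixed : ∀ p, isFixedSet R p (F p))
    (hSS : ∀ (p pa : P) (v : V), v ∈ F p → (pa, v) ∈ k0 → p = pa) :
    ∀ (p pa : P) (v : V) (n : ℕ), v ∈ F p → (pa, v) ∈ (fR R)^[n] k0 →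
      p = pa ∧ (pa, v) ∈ k0 := by
  have hstep : Set.MapsTo (fR R) {k | KnownOnlyAtSource F k0 k} {k | KnownOnlyAtSource F k0 k} :=
    fun _ => knownOnlyAtSource_fR hNoSelf hFixed
  have hinit : KnownOnlyAtSource F k0 k0 := fun p pa v hv hk => ⟨hSS p pa v hv hk, hk⟩
  exact fun p pa v n => hstep.iterate n hinit p pa v
end

section
/- Under the single-source axiom, the maximal state of knowledge is confined: f_R^*(k_0) ⊆ k_0 ∪ (P × (Knowledge(k_0) − F)), where F = ⋃_{p∈P} F_p, provided Knowledge(k_0) = Knowledge(f_R^*(k_0)). -/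
/-!
The state `k0 ∪ (P × (Knowledge k0 - ⋃ p, F p))` is already a fixed point of `fR R`, so by
minimality it contains `fstar k0`. In that state a fixed value `v ∈ F q` is held only by its
source `q`. Hence a rule deriving such a `v` for `p` has sender `q`; the fixed-set axiom makes `p`
hold some value of `F q`, so `p = q` as well, and the rule is a forbidden self-transfer.
-/

variable {P V : Type*}

/-- The pool of values known to some principal in state `k`. -/
def Knowledge (k : Set (P × V)) : Set V := {v | ∃ p, (p, v) ∈ k}

def IsSingleSource (F : P → Set V) (k : Set (P × V)) : Prop :=
  ∀ (p pa : P) (v : V), v ∈ F p → (pa, v) ∈ k → p = pa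

def confinedState (F : P → Set V) (k0 : Set (P × V)) : Set (P × V) :=
  k0 ∪ {pv | pv.2 ∈ Knowledge k0 ∧ pv.2 ∉ ⋃ p, F p}

section Confinement

variable {R : Set (P × V × P × Set (P × V))} {F : P → Set V}

theorem subset_fR (k : Set (P × V)) : k ⊆ fR R k :=
  Set.subset_union_left

theorem notMem_iUnion_of_derived
    (hNoSelf : ∀ (p : P) (v : V) (ka : Set (P × V)), (p, v, p, ka) ∉ R)
    (hFixed : ∀ p, isFixedSet R p (F p)) {k : Set (P × V)} (hk : IsSingleSource F k)
    {pb p : P} {v : V} {ka : Set (P × V)} (hpb : (pb, v) ∈ k) (hka : ka ⊆ k)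
    (hR : (pb, v, p, ka) ∈ R) : v ∉ ⋃ q, F q := by
  rw [Set.mem_iUnion]
  rintro ⟨q, hvq⟩
  obtain rfl : q = pb := hk q pb v hvq hpb
  obtain ⟨x, hxq, hxka⟩ := hFixed q v p ka hR hvq
  obtain rfl : q = p := hk q p x hxq (hka hxka)
  exact hNoSelf q v ka hR

theorem mem_of_mem_confinedState {k0 : Set (P × V)} {pv : P × V}
    (h : pv ∈ confinedState F k0) (hF : pv.2 ∈ ⋃ q, F q) : pv ∈ k0 :=
  h.resolve_right fun hnew => hnew.2 hF

theorem IsSingleSource.confinedState {k0 : Set (P × V)} (hk0 : IsSingleSource F k0) :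
    IsSingleSource F (confinedState F k0) := fun p pa v hv h =>
  hk0 p pa v hv (mem_of_mem_confinedState h (Set.mem_iUnion_of_mem p hv))

theorem fR_confinedState (hNoSelf : ∀ (p : P) (v : V) (ka : Set (P × V)), (p, v, p, ka) ∉ R)
    (hFixed : ∀ p, isFixedSet R p (F p)) {k0 : Set (P × V)} (hk0 : IsSingleSource F k0) :
    fR R (confinedState F k0) = confinedState F k0 := by
  refine Set.Subset.antisymm ?_ (subset_fR _)
  rintro ⟨p, v⟩ (hold | ⟨pb, ka, hpb, hka, hR⟩)
  · exact hold
  · have hvF := notMem_iUnion_of_derived hNoSelf hFixed hk0.confinedState hpb hka hR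
    refine Or.inr ⟨?_, hvF⟩
    rcases hpb with hpb | ⟨hv, -⟩
    · exact ⟨pb, hpb⟩
    · exact hv

end Confinement

theorem maximal_knowledge_confined_general
    (R : Set (P × V × P × Set (P × V))) (k0 : Set (P × V)) (F : P → Set V)
    (hNoSelf : ∀ (p : P) (v : V) (ka : Set (P × V)), (p, v, p, ka) ∉ R)
    (hFixed : ∀ p, isFixedSet R p (F p))
    (hSS : ∀ (p pa : P) (v : V), v ∈ F p → (pa, v) ∈ k0 → p = pa)
    (fstar : Set (P × V) → Set (P × V))
    (hmin : ∀ k k', fR R k' = k' → k ⊆ k' → fstar k ⊆ k') :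
    fstar k0 ⊆ k0 ∪ {pv : P × V | pv.2 ∈ Knowledge k0 ∧ pv.2 ∉ ⋃ p, F p} :=
  hmin k0 (confinedState F k0) (fR_confinedState hNoSelf hFixed hSS) Set.subset_union_left

theorem maximal_knowledge_confined
    (R : Set (P × V × P × Set (P × V))) (k0 : Set (P × V)) (F : P → Set V)
    (hNoSelf : ∀ (p : P) (v : V) (ka : Set (P × V)), (p, v, p, ka) ∉ R)
    (hFixed : ∀ p, isFixedSet R p (F p))
    (hSS : ∀ (p pa : P) (v : V), v ∈ F p → (pa, v) ∈ k0 → p = pa)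
    (fstar : Set (P × V) → Set (P × V))
    (hfix : ∀ k, fR R (fstar k) = fstar k)
    (hle : ∀ k, k ⊆ fstar k)
    (hmin : ∀ k k', fR R k' = k' → k ⊆ k' → fstar k ⊆ k')
    (hPool : Knowledge k0 = Knowledge (fstar k0)) :
    fstar k0 ⊆ k0 ∪ {pv : P × V | pv.2 ∈ Knowledge k0 ∧ pv.2 ∉ ⋃ p, F p} :=
  maximal_knowledge_confined_general R k0 F hNoSelf hFixed hSS fstar hmin
end

section
/- Under the single-source axiom and the fixed-pool assumption, restricting to the rule set R_F does not change the maximal state of knowledge: f_{R_F}^*(k_0) = f_R^*(k_0), where R_F = {(p_b, x, p_a, k_a) ∈ R : {(p_b, x)} ∪ k_a ⊆ k_0 ∪ (P × (Knowledge(k_0) − F))}. -/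
/-! A rule can only produce a fixed value `v ∈ F p` from a holder of `v`, and by the single-source
axiom the only holder of `v` in `k0` is `p` itself. The fixed-set axiom forces the rule's premises to
contain some `(pa, x)` with `x ∈ F p`; if that premise lay in `k0` then `pa = p`, a self-rule. Hence
`k0 ∪ (P × (V - F))` is closed under the rules, so the closure never holds a fixed value outside
`k0`, and together with the fixed-pool assumption every fact of the closure lies in
`U = k0 ∪ (P × (Knowledge k0 - F))`. Rules with a premise outside `U` are therefore never fired,
and dropping them does not change the closure. -/

variable {P V : Type*}

theorem fR_eq_self_of_closed {R : Set (P × V × P × Set (P × V))} {k : Set (P × V)}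
    (h : ∀ pb v pa ka, (pb, v) ∈ k → ka ⊆ k → (pb, v, pa, ka) ∈ R → (pa, v) ∈ k) :
    fR R k = k := by
  refine (Set.union_subset le_rfl ?_).antisymm Set.subset_union_left
  rintro ⟨pa, v⟩ ⟨pb, ka, hb, hka, hr⟩
  exact h pb v pa ka hb hka hr

theorem mem_fR_of_rule {R : Set (P × V × P × Set (P × V))} {k : Set (P × V)} {pb pa : P} {v : V}
    {ka : Set (P × V)} (hb : (pb, v) ∈ k) (hka : ka ⊆ k) (hr : (pb, v, pa, ka) ∈ R) :
    (pa, v) ∈ fR R k :=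
  Or.inr ⟨pb, ka, hb, hka, hr⟩

theorem fR_eq_self_union_nonfixed {R : Set (P × V × P × Set (P × V))} {k0 : Set (P × V)}
    {F : P → Set V}
    (hNoSelf : ∀ (p : P) (v : V) (ka : Set (P × V)), (p, v, p, ka) ∉ R)
    (hFixed : ∀ p, isFixedSet R p (F p))
    (hSS : ∀ (p pa : P) (v : V), v ∈ F p → (pa, v) ∈ k0 → p = pa) :
    fR R (k0 ∪ {pv | pv.2 ∉ ⋃ p, F p}) = k0 ∪ {pv | pv.2 ∉ ⋃ p, F p} := by
  refine fR_eq_self_of_closed fun pb v pa ka hb hka hr => ?_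
  by_cases hv : v ∈ ⋃ p, F p
  · exfalso
    obtain ⟨p, hvp⟩ := Set.mem_iUnion.mp hv
    have hb0 : (pb, v) ∈ k0 := hb.resolve_right (· hv)
    obtain rfl := hSS p pb v hvp hb0
    obtain ⟨x, hxp, hx⟩ := hFixed p v pa ka hr hvp
    have hx0 : (pa, x) ∈ k0 := (hka hx).resolve_right (· (Set.mem_iUnion.mpr ⟨p, hxp⟩))
    obtain rfl := hSS p pa x hxp hx0
    exact hNoSelf p v ka hr
  · exact Or.inr hv

section Closure

variable {fstar : Set (P × V × P × Set (P × V)) → Set (P × V) → Set (P × V)}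

theorem fstar_mono_rules (hfix : ∀ R' k, fR R' (fstar R' k) = fstar R' k)
    (hle : ∀ R' k, k ⊆ fstar R' k)
    (hmin : ∀ R' k k', fR R' k' = k' → k ⊆ k' → fstar R' k ⊆ k')
    {R R' : Set (P × V × P × Set (P × V))} (h : R' ⊆ R) (k : Set (P × V)) :
    fstar R' k ⊆ fstar R k :=
  hmin R' k _ (fR_eq_self_of_closed fun _ _ _ _ hb hka hr =>
    hfix R k ▸ mem_fR_of_rule hb hka (h hr)) (hle R k)

theorem fstar_restrict_premises_eq (hfix : ∀ R' k, fR R' (fstar R' k) = fstar R' k)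
    (hle : ∀ R' k, k ⊆ fstar R' k)
    (hmin : ∀ R' k k', fR R' k' = k' → k ⊆ k' → fstar R' k ⊆ k')
    {R : Set (P × V × P × Set (P × V))} {k U : Set (P × V)} (hU : fstar R k ⊆ U) :
    fstar {r | r ∈ R ∧ insert (r.1, r.2.1) r.2.2.2 ⊆ U} k = fstar R k := by
  set R' := {r | r ∈ R ∧ insert (r.1, r.2.1) r.2.2.2 ⊆ U}
  have hR' : fstar R' k ⊆ fstar R k := fstar_mono_rules hfix hle hmin (fun _ hr => hr.1) k
  refine hR'.antisymm (hmin R k _ (fR_eq_self_of_closed fun pb v pa ka hb hka hr => ?_) (hle R' k))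
  have hr' : (pb, v, pa, ka) ∈ R' :=
    ⟨hr, Set.insert_subset (hU (hR' hb)) fun _ hx => hU (hR' (hka hx))⟩
  exact hfix R' k ▸ mem_fR_of_rule hb hka hr'

end Closure

theorem restriction_to_RF
    (R : Set (P × V × P × Set (P × V))) (k0 : Set (P × V)) (F : P → Set V)
    (hNoSelf : ∀ (p : P) (v : V) (ka : Set (P × V)), (p, v, p, ka) ∉ R)
    (hFixed : ∀ p, isFixedSet R p (F p))
    (hSS : ∀ (p pa : P) (v : V), v ∈ F p → (pa, v) ∈ k0 → p = pa)
    (fstar : Set (P × V × P × Set (P × V)) → Set (P × V) → Set (P × V))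
    (hfix : ∀ R' k, fR R' (fstar R' k) = fstar R' k)
    (hle : ∀ R' k, k ⊆ fstar R' k)
    (hmin : ∀ R' k k', fR R' k' = k' → k ⊆ k' → fstar R' k ⊆ k')
    (hPool : Knowledge k0 = Knowledge (fstar R k0)) :
    fstar {r | r ∈ R ∧
        insert (r.1, r.2.1) r.2.2.2 ⊆
          k0 ∪ {pv : P × V | pv.2 ∈ Knowledge k0 ∧ pv.2 ∉ ⋃ p, F p}} k0
      = fstar R k0 := by
  have hNonfixed : fstar R k0 ⊆ k0 ∪ {pv | pv.2 ∉ ⋃ p, F p} :=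
    hmin R k0 _ (fR_eq_self_union_nonfixed hNoSelf hFixed hSS) Set.subset_union_left
  refine fstar_restrict_premises_eq hfix hle hmin fun pv hpv => ?_
  rcases hNonfixed hpv with h0 | hv
  · exact Or.inl h0
  · exact Or.inr ⟨hPool ▸ ⟨pv.1, hpv⟩, hv⟩
end

section
/- For every n, a single step of the projection onto Oscar commutes with a step of the knowledge flow: if X_n = {v : (o, v) ∈ f_R^n(k_0)}, then X_{n+1} = g(X_n), under the hypothesis (P − {o}) × (Knowledge(k_0) − F) ⊆ k_0; consequently X_n = g^n(X_0) for all n (Knowledge Flow Analysis Theorem). -/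
/-!
Every fact Oscar learns along `f_R` lies in `k₀ ∪ (P × (Knowledge k₀ − F))`: its value is in
`Knowledge k₀ = Knowledge (f_R^* k₀)`, and a fixed value can only be held by its owner, since
`f_R` preserves the single-source axiom (a fixed value is released only against another fixed
value of the same owner). Hence every rule that fires is a rule of `R_F`. Conversely a rule of
`R_F` whose Oscar-part of the precondition is known can fire, because
`(P − {o}) × (Knowledge k₀ − F) ⊆ k₀` supplies the rest of the precondition.
-/

variable {P V : Type*}

/-- The restriction `R_F` of the rules to values in `k0 ∪ (P × (Knowledge(k0) − F))`. -/
def RF (R : Set (P × V × P × Set (P × V))) (k0 : Set (P × V)) (Fall : Set V) :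
    Set (P × V × P × Set (P × V)) :=
  {r | r ∈ R ∧
    insert (r.1, r.2.1) r.2.2.2 ⊆ k0 ∪ {pv : P × V | pv.2 ∈ Knowledge k0 ∧ pv.2 ∉ Fall}}

/-- `X → x`: some honest principal tells `x` to Oscar `o` via a rule of `R_F` whose
precondition projected on Oscar is `X`. -/
def arrow (R : Set (P × V × P × Set (P × V))) (k0 : Set (P × V)) (Fall : Set V) (o : P)
    (X : Set V) (x : V) : Prop :=
  ∃ p ka, p ≠ o ∧ (p, x, o, ka) ∈ RF R k0 Fall ∧ X = {v | (o, v) ∈ ka}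

/-- The projection function `g`. -/
def g (R : Set (P × V × P × Set (P × V))) (k0 : Set (P × V)) (Fall : Set V) (o : P)
    (X : Set V) : Set V :=
  X ∪ {x | ∃ Xσ ⊆ X, arrow R k0 Fall o Xσ x}

section Flow

variable {R : Set (P × V × P × Set (P × V))}

theorem fR_mono : Monotone (fR R) := by
  rintro k k' h pv (hpv | ⟨pb, ka, hb, ha, hR⟩)
  · exact Or.inl (h hpv)
  · exact Or.inr ⟨pb, ka, h hb, ha.trans h, hR⟩

theorem subset_iterate_fR (k : Set (P × V)) (n : ℕ) : k ⊆ (fR R)^[n] k := by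
  induction n with
  | zero => exact subset_rfl
  | succ n ih =>
    rw [Function.iterate_succ_apply']
    exact ih.trans Set.subset_union_left

theorem iterate_fR_subset_of_fR_eq {k k' : Set (P × V)} (hk : k ⊆ k') (hfix : fR R k' = k')
    (n : ℕ) : (fR R)^[n] k ⊆ k' := by
  induction n with
  | zero => exact hk
  | succ n ih =>
    rw [Function.iterate_succ_apply', ← hfix]
    exact fR_mono ih

end Flow

theorem Knowledge_mono {k k' : Set (P × V)} (h : k ⊆ k') : Knowledge k ⊆ Knowledge k' :=
  fun _ ⟨p, hp⟩ => ⟨p, h hp⟩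

def SingleSource (F : P → Set V) (k : Set (P × V)) : Prop :=
  ∀ (p q : P) (v : V), v ∈ F p → (q, v) ∈ k → p = q

section SingleSource

variable {R : Set (P × V × P × Set (P × V))} {F : P → Set V}

theorem SingleSource.map_fR (hFixed : ∀ p, isFixedSet R p (F p)) {k : Set (P × V)}
    (h : SingleSource F k) : SingleSource F (fR R k) := by
  rintro p q v hv (hk | ⟨pb, ka, hb, ha, hR⟩)
  · exact h p q v hv hk
  · obtain rfl : p = pb := h p pb v hv hb
    obtain ⟨x, hx, hxa⟩ := hFixed p v q ka hR hv
    exact h p q x hx (ha hxa)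

theorem SingleSource.iterate_fR (hFixed : ∀ p, isFixedSet R p (F p)) {k : Set (P × V)}
    (h : SingleSource F k) (n : ℕ) : SingleSource F ((fR R)^[n] k) := by
  induction n with
  | zero => exact h
  | succ n ih =>
    rw [Function.iterate_succ_apply']
    exact ih.map_fR hFixed

theorem SingleSource.subset_union {k0 k : Set (P × V)} (h : SingleSource F k)
    (h0 : SingleSource F k0) (hK : Knowledge k ⊆ Knowledge k0) :
    k ⊆ k0 ∪ {pv : P × V | pv.2 ∈ Knowledge k0 ∧ pv.2 ∉ ⋃ p, F p} := by
  rintro ⟨q, v⟩ hqv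
  obtain ⟨q₀, hq₀⟩ := hK ⟨q, hqv⟩
  by_cases hv : v ∈ ⋃ p, F p
  · obtain ⟨p, hvp⟩ := Set.mem_iUnion.mp hv
    obtain rfl : p = q := h p q v hvp hqv
    obtain rfl : p = q₀ := h0 p q₀ v hvp hq₀
    exact Or.inl hq₀
  · exact Or.inr ⟨⟨q₀, hq₀⟩, hv⟩

end SingleSource

section Projection

variable {R : Set (P × V × P × Set (P × V))} {k0 k : Set (P × V)} {Fall : Set V} {o : P}

theorem mem_of_ne_of_mem_union
    (hInit : {pv : P × V | pv.1 ≠ o ∧ pv.2 ∈ Knowledge k0 ∧ pv.2 ∉ Fall} ⊆ k0)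
    (hk0 : k0 ⊆ k) {q : P} {v : V}
    (h : (q, v) ∈ k0 ∪ {pv : P × V | pv.2 ∈ Knowledge k0 ∧ pv.2 ∉ Fall}) (hq : q ≠ o) :
    (q, v) ∈ k := by
  rcases h with h | ⟨hK, hF⟩
  · exact hk0 h
  · exact hk0 (hInit ⟨hq, hK, hF⟩)

theorem fR_proj_subset_g (hNoSelf : ∀ (p : P) (v : V) (ka : Set (P × V)), (p, v, p, ka) ∉ R)
    (hk : k ⊆ k0 ∪ {pv : P × V | pv.2 ∈ Knowledge k0 ∧ pv.2 ∉ Fall}) :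
    {v | (o, v) ∈ fR R k} ⊆ g R k0 Fall o {v | (o, v) ∈ k} := by
  rintro x (hx | ⟨pb, ka, hb, ha, hR⟩)
  · exact Or.inl hx
  · have hpb : pb ≠ o := by
      rintro rfl
      exact hNoSelf pb x ka hR
    have hRF : (pb, x, o, ka) ∈ RF R k0 Fall :=
      ⟨hR, Set.insert_subset (hk hb) (ha.trans hk)⟩
    exact Or.inr ⟨_, fun v hv => ha hv, pb, ka, hpb, hRF, rfl⟩

theorem g_subset_fR_proj
    (hInit : {pv : P × V | pv.1 ≠ o ∧ pv.2 ∈ Knowledge k0 ∧ pv.2 ∉ Fall} ⊆ k0)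
    (hk0 : k0 ⊆ k) :
    g R k0 Fall o {v | (o, v) ∈ k} ⊆ {v | (o, v) ∈ fR R k} := by
  rintro x (hx | ⟨Xσ, hXσ, p, ka, hpo, ⟨hR, hRF⟩, rfl⟩)
  · exact Or.inl hx
  · have hpx : (p, x) ∈ k := mem_of_ne_of_mem_union hInit hk0 (hRF (Set.mem_insert _ _)) hpo
    have hka : ka ⊆ k := by
      rintro ⟨q, v⟩ hqv
      by_cases hq : q = o
      · subst hq
        exact hXσ hqv
      · exact mem_of_ne_of_mem_union hInit hk0 (hRF (Set.mem_insert_of_mem _ hqv)) hq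
    exact Or.inr ⟨p, ka, hpx, hka, hR⟩

theorem fR_proj_eq_g (hNoSelf : ∀ (p : P) (v : V) (ka : Set (P × V)), (p, v, p, ka) ∉ R)
    (hInit : {pv : P × V | pv.1 ≠ o ∧ pv.2 ∈ Knowledge k0 ∧ pv.2 ∉ Fall} ⊆ k0)
    (hk0 : k0 ⊆ k) (hk : k ⊆ k0 ∪ {pv : P × V | pv.2 ∈ Knowledge k0 ∧ pv.2 ∉ Fall}) :
    {v | (o, v) ∈ fR R k} = g R k0 Fall o {v | (o, v) ∈ k} :=
  (fR_proj_subset_g hNoSelf hk).antisymm (g_subset_fR_proj hInit hk0)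

end Projection

theorem knowledge_flow_analysis_general
    (R : Set (P × V × P × Set (P × V))) (k0 : Set (P × V)) (o : P) (F : P → Set V)
    (hNoSelf : ∀ (p : P) (v : V) (ka : Set (P × V)), (p, v, p, ka) ∉ R)
    (hFixed : ∀ p, isFixedSet R p (F p))
    (hSS : ∀ (p pa : P) (v : V), v ∈ F p → (pa, v) ∈ k0 → p = pa)
    (fstar : Set (P × V) → Set (P × V))
    (hfix : ∀ k, fR R (fstar k) = fstar k)
    (hle : ∀ k, k ⊆ fstar k)
    (hPool : Knowledge k0 = Knowledge (fstar k0))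
    (hInit : {pv : P × V | pv.1 ≠ o ∧ pv.2 ∈ Knowledge k0 ∧ pv.2 ∉ ⋃ p, F p} ⊆ k0) :
    (∀ n : ℕ,
      {v | (o, v) ∈ (fR R)^[n + 1] k0} =
        g R k0 (⋃ p, F p) o {v | (o, v) ∈ (fR R)^[n] k0}) ∧
    ∀ n : ℕ,
      {v | (o, v) ∈ (fR R)^[n] k0} = (g R k0 (⋃ p, F p) o)^[n] {v | (o, v) ∈ k0} := by
  have hK (n : ℕ) : Knowledge ((fR R)^[n] k0) ⊆ Knowledge k0 :=
    hPool ▸ Knowledge_mono (iterate_fR_subset_of_fR_eq (hle k0) (hfix k0) n)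
  have hstep (n : ℕ) : {v | (o, v) ∈ (fR R)^[n + 1] k0} =
      g R k0 (⋃ p, F p) o {v | (o, v) ∈ (fR R)^[n] k0} := by
    rw [Function.iterate_succ_apply']
    exact fR_proj_eq_g hNoSelf hInit (subset_iterate_fR k0 n)
      ((SingleSource.iterate_fR hFixed hSS n).subset_union hSS (hK n))
  refine ⟨hstep, fun n => ?_⟩
  induction n with
  | zero => rfl
  | succ n ih => rw [hstep n, ih, Function.iterate_succ_apply']

theorem knowledge_flow_analysis
    (R : Set (P × V × P × Set (P × V))) (k0 : Set (P × V)) (o : P) (F : P → Set V)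
    (hNoSelf : ∀ (p : P) (v : V) (ka : Set (P × V)), (p, v, p, ka) ∉ R)
    (hFixed : ∀ p, isFixedSet R p (F p))
    (hSS : ∀ (p pa : P) (v : V), v ∈ F p → (pa, v) ∈ k0 → p = pa)
    (fstar : Set (P × V) → Set (P × V))
    (hfix : ∀ k, fR R (fstar k) = fstar k)
    (hle : ∀ k, k ⊆ fstar k)
    (hmin : ∀ k k', fR R k' = k' → k ⊆ k' → fstar k ⊆ k')
    (hPool : Knowledge k0 = Knowledge (fstar k0))
    (hInit : {pv : P × V | pv.1 ≠ o ∧ pv.2 ∈ Knowledge k0 ∧ pv.2 ∉ ⋃ p, F p} ⊆ k0) :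
    (∀ n : ℕ,
      {v | (o, v) ∈ (fR R)^[n + 1] k0} =
        g R k0 (⋃ p, F p) o {v | (o, v) ∈ (fR R)^[n] k0}) ∧
    ∀ n : ℕ,
      {v | (o, v) ∈ (fR R)^[n] k0} = (g R k0 (⋃ p, F p) o)^[n] {v | (o, v) ∈ k0} :=
  knowledge_flow_analysis_general R k0 o F hNoSelf hFixed hSS fstar hfix hle hPool hInit
end

section
/- (Fixed set lemma) Let S ⊆ V^m be locally collision free and suppose every rule of principal p has the form (p, x_i, p_a, {(p_a, x_j) : j ∈ W_i}) for some i ∈ C ∪ D and (x_1,…,x_m) ∈ S. Then V − S_∞ is a fixed set for p: for each such rule with x_i ∈ V − S_∞, there exists x ∈ V − S_∞ with (p_a, x) in the rule's precondition. -/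
variable {P V : Type*} {m : ℕ}

def ImS (S : Set (Fin m → V)) (C : Set (Fin m)) : Set V :=
  {v | ∃ i ∈ C, ∃ x ∈ S, x i = v}

def Stage (S : Set (Fin m → V)) (C : Set (Fin m)) (W : Fin m → Set (Fin m)) :
    ℕ → Set V
  | 0 => (ImS S C)ᶜ
  | n + 1 => Stage S C W n ∪
      {v | ∃ i ∈ C, ∃ x ∈ S, x i = v ∧ ∀ j ∈ W i, x j ∈ Stage S C W n}

def SInf (S : Set (Fin m → V)) (C : Set (Fin m)) (W : Fin m → Set (Fin m)) : Set V :=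
  ⋃ n, Stage S C W n

/-! `S_∞` is closed under the rules `x_i ⇐ {x_j : j ∈ W_i}` (finitely many premises enter at a
common stage), and local collision freeness makes it closed under the inverse steps too: if
`x_h ∈ S_∞` with `h ∈ C`, then `x_h` entered through a rule `y_t` with
`y '' W_t = x '' W_h`, so every `x_i`, `i ∈ W_h`, was already present. For `i ∈ C` the first
fact yields a premise outside `S_∞`; for `i ∈ D` the partner `h ∈ C` given by (1) is one, by the
second. -/

lemma Stage_mono (S : Set (Fin m → V)) (C : Set (Fin m)) (W : Fin m → Set (Fin m)) :
    Monotone (Stage S C W) :=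
  monotone_nat_of_le_succ fun _ => Set.subset_union_left

lemma apply_mem_SInf_of_forall {S : Set (Fin m → V)} {C : Set (Fin m)}
    {W : Fin m → Set (Fin m)} {i : Fin m} (hi : i ∈ C) {x : Fin m → V} (hx : x ∈ S)
    (hW : ∀ j ∈ W i, x j ∈ SInf S C W) : x i ∈ SInf S C W := by
  have hev : ∀ j, ∀ᶠ n in Filter.atTop, j ∈ W i → x j ∈ Stage S C W n := fun j => by
    by_cases hj : j ∈ W i
    · obtain ⟨n, hn⟩ := Set.mem_iUnion.1 (hW j hj)
      exact Filter.eventually_atTop.2 ⟨n, fun k hk _ => Stage_mono S C W hk hn⟩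
    · exact Filter.Eventually.of_forall fun _ h => absurd h hj
  obtain ⟨n, hn⟩ := (Filter.eventually_all.2 hev).exists
  exact Set.mem_iUnion.2 ⟨n + 1, Or.inr ⟨i, hi, x, hx, rfl, hn⟩⟩

lemma apply_mem_SInf_of_apply_mem_SInf {S : Set (Fin m → V)} {C : Set (Fin m)}
    {W : Fin m → Set (Fin m)}
    (hLCF2 : ∀ i ∈ C, ∀ t ∈ C, ∀ x ∈ S, ∀ y ∈ S,
      x i = y t → x '' (W i) = y '' (W t))
    {h i : Fin m} (hh : h ∈ C) (hi : i ∈ W h) {x : Fin m → V} (hx : x ∈ S)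
    (hxh : x h ∈ SInf S C W) : x i ∈ SInf S C W := by
  obtain ⟨n, hn⟩ := Set.mem_iUnion.1 hxh
  induction n with
  | zero => exact absurd ⟨h, hh, x, hx, rfl⟩ hn
  | succ n ih =>
    rcases hn with hn | ⟨t, ht, y, hy, hyt, hpremises⟩
    · exact ih hn
    · obtain ⟨j, hj, hyj⟩ : x i ∈ y '' W t :=
        hLCF2 h hh t ht x hx y hy hyt.symm ▸ Set.mem_image_of_mem x hi
      exact Set.mem_iUnion.2 ⟨n, hyj ▸ hpremises j hj⟩

theorem fixed_set_lemma
    (R : Set (P × V × P × Set (P × V))) (p : P)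
    (S : Set (Fin m → V)) (C D : Set (Fin m)) (W : Fin m → Set (Fin m))
    (hLCF1 : ∀ i ∈ D, ∃ h ∈ C, h ∈ W i ∧ i ∈ W h)
    (hLCF2 : ∀ i ∈ C, ∀ t ∈ C, ∀ x ∈ S, ∀ y ∈ S,
      x i = y t → x '' (W i) = y '' (W t))
    (hshape : ∀ v pa ka, (p, v, pa, ka) ∈ R →
      ∃ i ∈ C ∪ D, ∃ x ∈ S, v = x i ∧ ka = {q : P × V | ∃ j ∈ W i, q = (pa, x j)}) :
    ∀ v pa ka, (p, v, pa, ka) ∈ R → v ∉ SInf S C W →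
      ∃ w, w ∉ SInf S C W ∧ (pa, w) ∈ ka := by
  intro v pa ka hR hv
  obtain ⟨i, hiC | hiD, x, hx, rfl, rfl⟩ := hshape v pa ka hR
  · contrapose! hv
    exact apply_mem_SInf_of_forall hiC hx fun j hj =>
      by_contra fun hxj => hv (x j) hxj ⟨j, hj, rfl⟩
  · obtain ⟨h, hhC, hhWi, hiWh⟩ := hLCF1 i hiD
    exact ⟨x h, fun hxh => hv (apply_mem_SInf_of_apply_mem_SInf hLCF2 hhC hiWh hx hxh),
      h, hhWi, rfl⟩
end
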